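/- (Principal solution) If the equation y'' + Q(s)·y = 0 with Q continuous is nonoscillatory at s = +∞ (i.e., solutions have no zeros for sufficiently large s), then there exists a nontrivial solution y₂, unique up to a constant factor, such that for every solution y₁ linearly independent of y₂, the ratio y₂(s)/y₁(s) tends to 0 as s → +∞. -/

import Mathlib

/-!
Solutions exist for all initial data: a solution is the same as a continuous solution of the
Volterra equation `y s = y t₀ + y' t₀ * (s - t₀) + ∫ t in t₀..s, (t - s) * Q t * y t`, and some
iterate of the corresponding Picard map is a contraction of `C([a, b], ℝ)`.

The Wronskian `W(y, z) = y z' - z y'` of two solutions is constant, hence `(z / y)' = W / y²`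
wherever `y ≠ 0`. Let `u` be a solution without zeros on `[s₀, ∞)`. If `∫ u⁻²` diverges, then
`y₁ / u = c + W(u, y₁) ∫ u⁻²` is unbounded for every `y₁` independent of `u`, so `u` is principal.
If it converges, `u ∫ₛ^∞ u⁻²` is a solution whose `∫ y⁻²` diverges. Two principal solutions with
nonzero Wronskian would have ratios tending to `0` in both directions, which is absurd; with zero
Wronskian they are proportional.
-/

open Filter

/-- `y` is a (twice differentiable) solution of `y'' + Q y = 0` on `ℝ`. -/
def IsSol (Q y : ℝ → ℝ) : Prop :=
  Differentiable ℝ y ∧ Differentiable ℝ (deriv y) ∧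
    ∀ s, deriv (deriv y) s + Q s * y s = 0

open Set Function MeasureTheory intervalIntegral
open scoped Nat Interval

section Volterra

variable {k : ℝ → ℝ → ℝ} {g : ℝ → ℝ} {a b t₀ : ℝ}

noncomputable def volterraMap (hk : Continuous (uncurry k)) (hg : Continuous g) (hab : a ≤ b)
    (t₀ : ℝ) (f : C(Icc a b, ℝ)) : C(Icc a b, ℝ) where
  toFun s := g s + ∫ t in t₀..s, k s t * IccExtend hab f t
  continuous_toFun := by
    have : Continuous (uncurry fun s t => k s t * IccExtend hab f t) :=
      hk.mul (f.continuous.Icc_extend'.comp continuous_snd)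
    exact (hg.add (continuous_parametric_intervalIntegral_of_continuous this continuous_id)).comp
      continuous_subtype_val

section VolterraMap

variable (hk : Continuous (uncurry k)) (hg : Continuous g) (hab : a ≤ b)

lemma volterraMap_apply (ht₀ : t₀ ∈ Icc a b) {f : C(Icc a b, ℝ)} {y : ℝ → ℝ}
    (hfy : ∀ t : Icc a b, f t = y t) (s : Icc a b) :
    volterraMap hk hg hab t₀ f s = g s + ∫ t in t₀..s, k s t * y t := by
  refine congrArg (g s + ·) (integral_congr fun t ht => ?_)
  have ht' : t ∈ Icc a b := uIcc_subset_Icc ht₀ s.2 ht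
  simp only [IccExtend_of_mem hab _ ht', hfy]

lemma dist_volterraMap_iterate_apply_le (ht₀ : t₀ ∈ Icc a b) {K : ℝ}
    (hK : ∀ s ∈ Icc a b, ∀ t ∈ Icc a b, |k s t| ≤ K) (f h : C(Icc a b, ℝ)) (n : ℕ)
    (s : Icc a b) :
    dist ((volterraMap hk hg hab t₀)^[n] f s) ((volterraMap hk hg hab t₀)^[n] h s) ≤
      (K * |s - t₀|) ^ n / n ! * dist f h := by
  induction n generalizing s with
  | zero => simpa using ContinuousMap.dist_apply_le_dist (f := f) (g := h) s
  | succ n ih =>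
    have hK0 : 0 ≤ K := (abs_nonneg _).trans (hK _ ht₀ _ ht₀)
    have hint (F : C(Icc a b, ℝ)) :
        IntervalIntegrable (fun t => k s t * IccExtend hab F t) volume t₀ s :=
      ((hk.comp (Continuous.prodMk_right (s : ℝ))).mul
        F.continuous.Icc_extend').intervalIntegrable _ _
    rw [iterate_succ_apply', iterate_succ_apply', Real.dist_eq]
    simp only [volterraMap, ContinuousMap.coe_mk, add_sub_add_left_eq_sub,
      ← integral_sub (hint _) (hint _), ← mul_sub]
    calc _ ≤ ∫ t in Ι t₀ s, K ^ (n + 1) * |t - t₀| ^ n / n ! * dist f h := by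
          rw [← Real.norm_eq_abs, norm_intervalIntegral_eq]
          apply MeasureTheory.norm_integral_le_of_norm_le
            (Continuous.integrableOn_uIoc (by fun_prop))
          refine (ae_restrict_mem measurableSet_Ioc).mono fun t ht => ?_
          have ht' : t ∈ Icc a b := (uIoc_subset_uIcc.trans (uIcc_subset_Icc ht₀ s.2)) ht
          rw [Real.norm_eq_abs, abs_mul, IccExtend_of_mem hab _ ht', IccExtend_of_mem hab _ ht',
            ← Real.dist_eq, pow_succ', mul_assoc, mul_div_assoc, mul_assoc]
          gcongr
          · exact hK _ s.2 _ ht'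
          · simpa [mul_pow, mul_div_assoc] using ih ⟨t, ht'⟩
      _ ≤ (K * |s - t₀|) ^ (n + 1) / (n + 1)! * dist f h := by
          apply le_of_abs_le
          rw [← abs_intervalIntegral_eq, intervalIntegral.integral_mul_const,
            intervalIntegral.integral_div, intervalIntegral.integral_const_mul, abs_mul, abs_div,
            abs_mul, abs_intervalIntegral_eq, integral_pow_abs_sub_uIoc, abs_div,
            abs_pow, abs_pow, abs_dist, abs_of_nonneg hK0, abs_abs, mul_div, div_div, ← abs_mul,
            ← Nat.cast_succ, ← Nat.cast_mul, ← Nat.factorial_succ, Nat.abs_cast, ← mul_pow]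

lemma exists_unique_isFixedPt_volterraMap (ht₀ : t₀ ∈ Icc a b) :
    ∃! f, IsFixedPt (volterraMap hk hg hab t₀) f := by
  obtain ⟨K, hK⟩ := (isCompact_Icc.prod isCompact_Icc).exists_bound_of_continuousOn
    (hk.continuousOn (s := Icc a b ×ˢ Icc a b))
  have hK' : ∀ s ∈ Icc a b, ∀ t ∈ Icc a b, |k s t| ≤ K := fun s hs t ht => hK (s, t) ⟨hs, ht⟩
  have hK0 : 0 ≤ K := (abs_nonneg _).trans (hK' _ ht₀ _ ht₀)
  have hba : 0 ≤ b - a := sub_nonneg.2 hab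
  set T := volterraMap hk hg hab t₀
  have hdist (n : ℕ) (f h : C(Icc a b, ℝ)) :
      dist (T^[n] f) (T^[n] h) ≤ (K * (b - a)) ^ n / n ! * dist f h := by
    refine (ContinuousMap.dist_le (by positivity)).2 fun s => ?_
    refine (dist_volterraMap_iterate_apply_le hk hg hab ht₀ hK' f h n s).trans ?_
    have : |(s : ℝ) - t₀| ≤ b - a :=
      abs_sub_le_iff.2 ⟨by linarith [s.2.2, ht₀.1], by linarith [s.2.1, ht₀.2]⟩
    gcongr
  obtain ⟨n, hn⟩ := (FloorSemiring.tendsto_pow_div_factorial_atTop (K * (b - a))).eventually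
    (gt_mem_nhds zero_lt_one) |>.exists
  have hT : ContractingWith ⟨(K * (b - a)) ^ n / n !, by positivity⟩ T^[n] :=
    ⟨hn, LipschitzWith.of_dist_le_mul (hdist n)⟩
  exact ⟨_, hT.isFixedPt_fixedPoint_iterate,
    fun f hf => hT.fixedPoint_unique (hf.iterate n)⟩

end VolterraMap

lemma exists_continuous_volterra_Icc (hk : Continuous (uncurry k)) (hg : Continuous g)
    (ht₀ : t₀ ∈ Icc a b) :
    ∃ y : ℝ → ℝ, Continuous y ∧ ∀ s ∈ Icc a b, y s = g s + ∫ t in t₀..s, k s t * y t := by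
  have hab : a ≤ b := ht₀.1.trans ht₀.2
  obtain ⟨f, hf, -⟩ := exists_unique_isFixedPt_volterraMap hk hg hab ht₀
  refine ⟨IccExtend hab f, f.continuous.Icc_extend', fun s hs => ?_⟩
  rw [IccExtend_of_mem hab _ hs]
  conv_lhs => rw [← hf.eq]
  exact volterraMap_apply hk hg hab ht₀ (fun t => (IccExtend_val hab f t).symm) ⟨s, hs⟩

lemma volterra_eqOn_Icc (hk : Continuous (uncurry k)) (hg : Continuous g) (ht₀ : t₀ ∈ Icc a b)
    {y z : ℝ → ℝ}
    (hy : ContinuousOn y (Icc a b)) (hz : ContinuousOn z (Icc a b))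
    (hy_eq : ∀ s ∈ Icc a b, y s = g s + ∫ t in t₀..s, k s t * y t)
    (hz_eq : ∀ s ∈ Icc a b, z s = g s + ∫ t in t₀..s, k s t * z t) :
    EqOn y z (Icc a b) := by
  have hab : a ≤ b := ht₀.1.trans ht₀.2
  have hfix {w : ℝ → ℝ} (hw : ContinuousOn w (Icc a b))
      (hw_eq : ∀ s ∈ Icc a b, w s = g s + ∫ t in t₀..s, k s t * w t) :
      IsFixedPt (volterraMap hk hg hab t₀) ⟨(Icc a b).domRestrict w, hw.domRestrict⟩ := by
    ext s
    rw [volterraMap_apply hk hg hab ht₀ (fun _ => rfl), ← hw_eq s s.2]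
    rfl
  obtain ⟨f, -, hf⟩ := exists_unique_isFixedPt_volterraMap hk hg hab ht₀
  intro s hs
  exact congrArg (· ⟨s, hs⟩) ((hf _ (hfix hy hy_eq)).trans (hf _ (hfix hz hz_eq)).symm)

lemma exists_continuous_volterra (hk : Continuous (uncurry k)) (hg : Continuous g) (t₀ : ℝ) :
    ∃ y : ℝ → ℝ, Continuous y ∧ ∀ s, y s = g s + ∫ t in t₀..s, k s t * y t := by
  have hmem (n : ℕ) : t₀ ∈ Icc (t₀ - n) (t₀ + n) := mem_Icc_iff_abs_le.1 (by simp)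
  choose Y hYc hY using fun n : ℕ => exists_continuous_volterra_Icc hk hg (hmem n)
  have hagree {n m : ℕ} (hnm : n ≤ m) : EqOn (Y n) (Y m) (Icc (t₀ - n) (t₀ + n)) := by
    have hsub : Icc (t₀ - n) (t₀ + n) ⊆ Icc (t₀ - m) (t₀ + m) :=
      Icc_subset_Icc (by gcongr) (by gcongr)
    exact volterra_eqOn_Icc hk hg (hmem n) (hYc n).continuousOn (hYc m).continuousOn (hY n)
      fun s hs => hY m s (hsub hs)
  set N : ℝ → ℕ := fun s => ⌈|s - t₀|⌉₊ + 1
  have hN (s : ℝ) : s ∈ Ioo (t₀ - N s) (t₀ + N s) := by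
    have : |s - t₀| < N s := by
      simp only [N]
      push_cast
      linarith [Nat.le_ceil |s - t₀|]
    constructor <;> linarith [abs_sub_lt_iff.1 this]
  set y : ℝ → ℝ := fun s => Y (N s) s
  have hy {n : ℕ} {s : ℝ} (hs : s ∈ Icc (t₀ - n) (t₀ + n)) : y s = Y n s := by
    rcases le_total n (N s) with h | h
    · exact (hagree h hs).symm
    · exact hagree h (Ioo_subset_Icc_self (hN s))
  refine ⟨y, continuous_iff_continuousAt.2 fun s => ?_, fun s => ?_⟩
  · refine (hYc (N s)).continuousAt.congr (eventuallyEq_of_mem (isOpen_Ioo.mem_nhds (hN s)) ?_)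
    exact fun t ht => (hy (Ioo_subset_Icc_self ht)).symm
  · have hs := Ioo_subset_Icc_self (hN s)
    rw [hy hs, hY _ s hs]
    refine congrArg (g s + ·) (integral_congr fun t ht => ?_)
    rw [hy (uIcc_subset_Icc (hmem _) hs ht)]

lemma volterra_unique (hk : Continuous (uncurry k)) (hg : Continuous g) {y z : ℝ → ℝ}
    (hy : Continuous y) (hz : Continuous z)
    (hy_eq : ∀ s, y s = g s + ∫ t in t₀..s, k s t * y t)
    (hz_eq : ∀ s, z s = g s + ∫ t in t₀..s, k s t * z t) : y = z := by
  funext s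
  have hmem : t₀ ∈ Icc (min s t₀) (max s t₀) := ⟨min_le_right _ _, le_max_right _ _⟩
  exact volterra_eqOn_Icc hk hg hmem hy.continuousOn hz.continuousOn (fun s _ => hy_eq s)
    (fun s _ => hz_eq s) ⟨min_le_left _ _, le_max_left _ _⟩

end Volterra

section Solutions

variable {Q y z : ℝ → ℝ}

lemma isSol_of_hasDerivAt {y' : ℝ → ℝ} (hy : ∀ s, HasDerivAt y (y' s) s)
    (hy' : ∀ s, HasDerivAt y' (-(Q s * y s)) s) : IsSol Q y := by
  have hderiv : deriv y = y' := funext fun s => (hy s).deriv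
  refine ⟨fun s => (hy s).differentiableAt, hderiv ▸ fun s => (hy' s).differentiableAt,
    fun s => ?_⟩
  rw [hderiv, (hy' s).deriv]
  ring

lemma IsSol.hasDerivAt_deriv (hy : IsSol Q y) (s : ℝ) :
    HasDerivAt (deriv y) (-(Q s * y s)) s := by
  rw [← eq_neg_of_add_eq_zero_left (hy.2.2 s)]
  exact (hy.2.1 s).hasDerivAt

lemma IsSol.mul_add_mul (hy : IsSol Q y) (hz : IsSol Q z) (c d : ℝ) :
    IsSol Q fun s => c * y s + d * z s := by
  refine isSol_of_hasDerivAt (y' := fun s => c * deriv y s + d * deriv z s)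
    (fun s => ((hy.1 s).hasDerivAt.const_mul c).add ((hz.1 s).hasDerivAt.const_mul d))
    fun s => (((hy.hasDerivAt_deriv s).const_mul c).add
      ((hz.hasDerivAt_deriv s).const_mul d)).congr_deriv (by ring)

lemma IsSol.deriv_mul_add_mul (hy : IsSol Q y) (hz : IsSol Q z) (c d s : ℝ) :
    deriv (fun s => c * y s + d * z s) s = c * deriv y s + d * deriv z s :=
  (((hy.1 s).hasDerivAt.const_mul c).add ((hz.1 s).hasDerivAt.const_mul d)).deriv

lemma integral_sub_mul_eq {f : ℝ → ℝ} (hf : Continuous f) (a s : ℝ) :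
    ∫ t in a..s, (t - s) * f t = (∫ t in a..s, t * f t) - s * ∫ t in a..s, f t := by
  rw [← intervalIntegral.integral_const_mul, ← intervalIntegral.integral_sub
    ((by fun_prop : Continuous fun t => t * f t).intervalIntegrable _ _)
    ((by fun_prop : Continuous fun t => s * f t).intervalIntegrable _ _)]
  simp only [sub_mul]

lemma isSol_of_volterra (hQ : Continuous Q) (hy : Continuous y) {t₀ a₀ b₀ : ℝ}
    (h : ∀ s, y s = a₀ + b₀ * (s - t₀) + ∫ t in t₀..s, (t - s) * Q t * y t) :
    IsSol Q y ∧ y t₀ = a₀ ∧ deriv y t₀ = b₀ := by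
  have hQy : Continuous fun t => Q t * y t := hQ.mul hy
  set G := fun s => ∫ t in t₀..s, Q t * y t
  set H := fun s => ∫ t in t₀..s, t * (Q t * y t)
  have hG (s : ℝ) : HasDerivAt G (Q s * y s) s := (hQy.integral_hasStrictDerivAt t₀ s).hasDerivAt
  have hH (s : ℝ) : HasDerivAt H (s * (Q s * y s)) s :=
    ((continuous_id.mul hQy).integral_hasStrictDerivAt t₀ s).hasDerivAt
  have hsplit : y = fun s => a₀ + b₀ * (s - t₀) + (H s - s * G s) := by
    funext s
    simp only [h s, mul_assoc, integral_sub_mul_eq hQy, G, H]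
  have hy' (s : ℝ) : HasDerivAt y (b₀ - G s) s := by
    rw [hsplit]
    exact ((((hasDerivAt_id s).sub_const t₀).const_mul b₀).const_add a₀ |>.add
      ((hH s).sub ((hasDerivAt_id s).mul (hG s)))).congr_deriv (by simp only [id]; ring)
  refine ⟨isSol_of_hasDerivAt hy' fun s => (hG s).const_sub b₀, by simp [h t₀], ?_⟩
  simp [(hy' t₀).deriv, G]

lemma IsSol.volterra (hQ : Continuous Q) (hy : IsSol Q y) (t₀ s : ℝ) :
    y s = y t₀ + deriv y t₀ * (s - t₀) + ∫ t in t₀..s, (t - s) * Q t * y t := by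
  have hΦ (t : ℝ) : HasDerivAt (fun u => (s - u) * deriv y u + y u) ((t - s) * Q t * y t) t :=
    ((((hasDerivAt_id t).const_sub s).mul (hy.hasDerivAt_deriv t)).add
      (hy.1 t).hasDerivAt).congr_deriv (by simp only [id]; ring)
  have hint : IntervalIntegrable (fun t => (t - s) * Q t * y t) volume t₀ s :=
    (((continuous_id.sub continuous_const).mul hQ).mul hy.1.continuous).intervalIntegrable _ _
  rw [integral_eq_sub_of_hasDerivAt (fun t _ => hΦ t) hint]
  ring

lemma exists_isSol (hQ : Continuous Q) (t₀ a₀ b₀ : ℝ) :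
    ∃ y, IsSol Q y ∧ y t₀ = a₀ ∧ deriv y t₀ = b₀ := by
  obtain ⟨y, hy, h⟩ := exists_continuous_volterra (k := fun s t => (t - s) * Q t)
    (g := fun s => a₀ + b₀ * (s - t₀))
    ((continuous_snd.sub continuous_fst).mul (hQ.comp continuous_snd)) (by fun_prop) t₀
  exact ⟨y, isSol_of_volterra hQ hy h⟩

lemma IsSol.eq_zero (hQ : Continuous Q) (hy : IsSol Q y) {t₀ : ℝ} (h₀ : y t₀ = 0)
    (h₁ : deriv y t₀ = 0) : y = 0 :=
  volterra_unique (k := fun s t => (t - s) * Q t) (g := fun _ => 0)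
    ((continuous_snd.sub continuous_fst).mul (hQ.comp continuous_snd)) continuous_const
    hy.1.continuous continuous_const
    (fun s => by simpa [h₀, h₁, mul_assoc] using hy.volterra hQ t₀ s)
    (fun s => by simp)

noncomputable def wronskian (y z : ℝ → ℝ) (s : ℝ) : ℝ := y s * deriv z s - z s * deriv y s

lemma wronskian_swap (y z : ℝ → ℝ) (s : ℝ) : wronskian z y s = -wronskian y z s := by
  unfold wronskian
  ring

lemma IsSol.wronskian_eq (hy : IsSol Q y) (hz : IsSol Q z) (s t : ℝ) :
    wronskian y z s = wronskian y z t := by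
  have hW (u : ℝ) : HasDerivAt (wronskian y z) 0 u :=
    (((hy.1 u).hasDerivAt.mul (hz.hasDerivAt_deriv u)).sub
      ((hz.1 u).hasDerivAt.mul (hy.hasDerivAt_deriv u))).congr_deriv (by ring)
  exact is_const_of_deriv_eq_zero (fun u => (hW u).differentiableAt) (fun u => (hW u).deriv) s t

lemma IsSol.eq_mul_of_wronskian_eq_zero (hQ : Continuous Q) (hy : IsSol Q y) (hz : IsSol Q z)
    {t₀ : ℝ} (hy₀ : y t₀ ≠ 0) (hW : wronskian y z t₀ = 0) (s : ℝ) :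
    z s = z t₀ / y t₀ * y s := by
  have hw := (hz.mul_add_mul hy 1 (-(z t₀ / y t₀))).eq_zero hQ (t₀ := t₀) (by field_simp; ring)
    (by
      rw [hz.deriv_mul_add_mul hy]
      unfold wronskian at hW
      field_simp
      linear_combination hW)
  have := congrFun hw s
  simp only [Pi.zero_apply] at this
  linarith

lemma intervalIntegrable_inv_sq (hy : Continuous y) {a b : ℝ} (hne : ∀ t ∈ uIcc a b, y t ≠ 0) :
    IntervalIntegrable (fun t => (y t ^ 2)⁻¹) volume a b :=
  ((hy.pow 2).continuousOn.inv₀ fun t ht => pow_ne_zero 2 (hne t ht)).intervalIntegrable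

lemma IsSol.div_eq_add_wronskian_mul_integral (hy : IsSol Q y) (hz : IsSol Q z) {s₀ s : ℝ}
    (hs : s₀ ≤ s) (hne : ∀ t ∈ Icc s₀ s, y t ≠ 0) :
    z s / y s = z s₀ / y s₀ + wronskian y z s₀ * ∫ t in s₀..s, (y t ^ 2)⁻¹ := by
  rw [← uIcc_of_le hs] at hne
  have hderiv (t : ℝ) (ht : t ∈ uIcc s₀ s) :
      HasDerivAt (fun t => z t / y t) (wronskian y z s₀ * (y t ^ 2)⁻¹) t := by
    refine ((hz.1 t).hasDerivAt.div (hy.1 t).hasDerivAt (hne t ht)).congr_deriv ?_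
    rw [← hy.wronskian_eq hz t s₀, wronskian]
    field_simp
  rw [← intervalIntegral.integral_const_mul, integral_eq_sub_of_hasDerivAt hderiv
    ((intervalIntegrable_inv_sq hy.1.continuous hne).const_mul _)]
  ring

end Solutions

def IsPrincipalSol (Q y₂ : ℝ → ℝ) : Prop :=
  ∀ y₁, IsSol Q y₁ → (∀ s, wronskian y₁ y₂ s ≠ 0) →
    Tendsto (fun s => y₂ s / y₁ s) atTop (nhds 0)

section Principal

variable {Q y z : ℝ → ℝ} {s₀ : ℝ}

lemma isPrincipalSol_of_tendsto_integral (hy : IsSol Q y) (hne : ∀ s ≥ s₀, y s ≠ 0)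
    (hdiv : Tendsto (fun s => ∫ t in s₀..s, (y t ^ 2)⁻¹) atTop atTop) : IsPrincipalSol Q y := by
  intro y₁ hy₁ hW
  have hc : wronskian y y₁ s₀ ≠ 0 := by
    rw [wronskian_swap]
    exact neg_ne_zero.2 (hW s₀)
  set c := wronskian y y₁ s₀
  have heq : ∀ s ≥ s₀, y s / y₁ s =
      c⁻¹ * ((∫ t in s₀..s, (y t ^ 2)⁻¹) + y₁ s₀ / y s₀ / c)⁻¹ := fun s hs => by
    rw [← inv_div, hy.div_eq_add_wronskian_mul_integral hy₁ hs fun t ht => hne t ht.1, ← mul_inv]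
    congr 1
    field_simp
    ring
  simpa using ((tendsto_atTop_add_const_right _ _ hdiv).inv_tendsto_atTop.const_mul c⁻¹).congr'
    (eventually_ge_atTop s₀ |>.mono fun s hs => (heq s hs).symm)

lemma IsPrincipalSol.exists_eq_const_mul (hQ : Continuous Q) (hy : IsSol Q y) (hz : IsSol Q z)
    (hyp : IsPrincipalSol Q y) (hzp : IsPrincipalSol Q z) (hy0 : ∀ᶠ s in atTop, y s ≠ 0)
    (hz0 : ∀ᶠ s in atTop, z s ≠ 0) : ∃ k ≠ 0, ∀ s, z s = k * y s := by
  obtain ⟨t, hyt, hzt⟩ := (hy0.and hz0).exists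
  by_cases hW : wronskian y z t = 0
  · exact ⟨z t / y t, div_ne_zero hzt hyt, hy.eq_mul_of_wronskian_eq_zero hQ hz hyt hW⟩
  have hzy := hzp y hy fun s => by rwa [hy.wronskian_eq hz s t]
  have hyz := hyp z hz fun s => by
    rw [wronskian_swap, hy.wronskian_eq hz s t]
    exact neg_ne_zero.2 hW
  have hprod := hzy.mul hyz
  rw [mul_zero] at hprod
  have hone : (fun s => z s / y s * (y s / z s)) =ᶠ[atTop] fun _ => 1 :=
    (hy0.and hz0).mono fun s ⟨hys, hzs⟩ => by field_simp
  exact absurd (tendsto_nhds_unique tendsto_const_nhds (hprod.congr' hone)) one_ne_zero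

end Principal

section Existence

variable {Q u : ℝ → ℝ} {s₀ : ℝ}

lemma strictMonoOn_integral_inv_sq (hu : Continuous u) (hne : ∀ s ≥ s₀, u s ≠ 0) :
    StrictMonoOn (fun s => ∫ t in s₀..s, (u t ^ 2)⁻¹) (Ici s₀) := by
  intro s hs s' hs' hss'
  have hint {a b : ℝ} (ha : s₀ ≤ a) (hb : s₀ ≤ b) :
      IntervalIntegrable (fun t => (u t ^ 2)⁻¹) volume a b :=
    intervalIntegrable_inv_sq hu fun t ht => hne t (le_min ha hb |>.trans ht.1)
  dsimp only
  rw [← integral_add_adjacent_intervals (hint le_rfl hs) (hint hs hs')]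
  refine lt_add_of_pos_right _ (intervalIntegral_pos_of_pos_on (hint hs hs') (fun t ht => ?_) hss')
  have := hne t (hs.trans ht.1.le)
  positivity

lemma exists_isSol_of_tendsto_integral_inv_sq (hQ : Continuous Q) (hu : IsSol Q u)
    (hne : ∀ s ≥ s₀, u s ≠ 0) {L : ℝ}
    (hA : Tendsto (fun s => ∫ t in s₀..s, (u t ^ 2)⁻¹) atTop (nhds L))
    (hAL : ∀ s ≥ s₀, ∫ t in s₀..s, (u t ^ 2)⁻¹ < L) :
    ∃ y, IsSol Q y ∧ (∀ s ≥ s₀, y s ≠ 0) ∧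
      Tendsto (fun s => ∫ t in s₀..s, (y t ^ 2)⁻¹) atTop atTop := by
  set A := fun s => ∫ t in s₀..s, (u t ^ 2)⁻¹
  have hu₀ := hne s₀ le_rfl
  obtain ⟨v, hv, hv₀, hv₁⟩ := exists_isSol hQ s₀ 0 (u s₀)⁻¹
  have hW : wronskian u v s₀ = 1 := by simp [wronskian, hv₀, hv₁, hu₀]
  have hvu : ∀ s ≥ s₀, v s = u s * A s := fun s hs => by
    have := hu.div_eq_add_wronskian_mul_integral hv hs fun t ht => hne t ht.1
    rw [hW, hv₀, zero_div, zero_add, one_mul, div_eq_iff (hne s hs)] at this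
    rw [this, mul_comm]
  -- `y = u (L - A) = u ∫ₛ^∞ u⁻²` is the second solution given by reduction of order
  set y := fun s => L * u s + -1 * v s
  have hy : IsSol Q y := hu.mul_add_mul hv L (-1)
  have hyu : ∀ s ≥ s₀, y s = u s * (L - A s) := fun s hs => by
    simp only [y, hvu s hs]
    ring
  have hyne : ∀ s ≥ s₀, y s ≠ 0 := fun s hs => by
    rw [hyu s hs]
    exact mul_ne_zero (hne s hs) (sub_pos.2 (hAL s hs)).ne'
  have hWy : wronskian y u s₀ = 1 := by
    rw [← hW, wronskian, wronskian, hu.deriv_mul_add_mul hv]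
    ring
  have hquot : ∀ s ≥ s₀, (∫ t in s₀..s, (y t ^ 2)⁻¹) = (L - A s)⁻¹ - u s₀ / y s₀ := fun s hs => by
    have := hy.div_eq_add_wronskian_mul_integral hu hs fun t ht => hyne t ht.1
    rw [hWy, one_mul, hyu s hs, div_mul_cancel_left₀ (hne s hs)] at this
    linarith
  have hLA : Tendsto (fun s => L - A s) atTop (nhdsWithin 0 (Ioi 0)) :=
    tendsto_nhdsWithin_iff.2 ⟨by simpa using hA.const_sub L,
      (eventually_ge_atTop s₀).mono fun s hs => sub_pos.2 (hAL s hs)⟩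
  refine ⟨y, hy, hyne, ?_⟩
  exact (tendsto_atTop_add_const_right _ _ (tendsto_inv_nhdsGT_zero.comp hLA)).congr'
    ((eventually_ge_atTop s₀).mono fun s hs => (hquot s hs).symm)

lemma exists_isSol_tendsto_integral_inv_sq (hQ : Continuous Q) (hu : IsSol Q u)
    (hne : ∀ s ≥ s₀, u s ≠ 0) :
    ∃ y, IsSol Q y ∧ (∀ s ≥ s₀, y s ≠ 0) ∧
      Tendsto (fun s => ∫ t in s₀..s, (y t ^ 2)⁻¹) atTop atTop := by
  set A := fun s => ∫ t in s₀..s, (u t ^ 2)⁻¹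
  have hA := strictMonoOn_integral_inv_sq hu.1.continuous hne
  have hmono : Monotone fun x => A (max s₀ x) := fun x x' h =>
    hA.monotoneOn (le_max_left s₀ x) (le_max_left s₀ x') (max_le_max_left _ h)
  have hev : (fun x => A (max s₀ x)) =ᶠ[atTop] A :=
    (eventually_ge_atTop s₀).mono fun x hx => by simp only [max_eq_right hx]
  by_cases hbdd : BddAbove (range fun x => A (max s₀ x))
  · refine exists_isSol_of_tendsto_integral_inv_sq hQ hu hne
      ((tendsto_atTop_ciSup hmono hbdd).congr' hev) fun s hs => ?_
    calc A s < A (s + 1) := hA hs (hs.trans (by linarith) : s₀ ≤ s + 1) (lt_add_one s)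
      _ = A (max s₀ (s + 1)) := by rw [max_eq_right (by linarith)]
      _ ≤ _ := le_ciSup hbdd (s + 1)
  · exact ⟨u, hu, hne, (tendsto_atTop_atTop_of_monotone' hmono hbdd).congr' hev⟩

end Existence

/-- Existence and essential uniqueness of the principal solution of a
nonoscillatory equation `y'' + Q y = 0` at `+∞`. -/
theorem principal_solution_exists_unique (Q : ℝ → ℝ) (hQ : Continuous Q)
    (hnonosc : ∀ y, IsSol Q y → y ≠ 0 → ∃ s₀ : ℝ, ∀ s ≥ s₀, y s ≠ 0) :
    ∃ y₂, IsSol Q y₂ ∧ y₂ ≠ 0 ∧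
      (∀ y₁, IsSol Q y₁ → (∀ s, y₁ s * deriv y₂ s - y₂ s * deriv y₁ s ≠ 0) →
        Tendsto (fun s => y₂ s / y₁ s) atTop (nhds 0)) ∧
      (∀ z, IsSol Q z → z ≠ 0 →
        (∀ y₁, IsSol Q y₁ → (∀ s, y₁ s * deriv z s - z s * deriv y₁ s ≠ 0) →
          Tendsto (fun s => z s / y₁ s) atTop (nhds 0)) →
        ∃ k : ℝ, k ≠ 0 ∧ ∀ s, z s = k * y₂ s) := by
  obtain ⟨u, hu, hu₀, -⟩ := exists_isSol hQ 0 1 0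
  obtain ⟨s₀, hs₀⟩ := hnonosc u hu fun h => by simp [h] at hu₀
  obtain ⟨y, hy, hyne, hdiv⟩ := exists_isSol_tendsto_integral_inv_sq hQ hu hs₀
  have hyp : IsPrincipalSol Q y := isPrincipalSol_of_tendsto_integral hy hyne hdiv
  refine ⟨y, hy, fun h => hyne s₀ le_rfl (congrFun h s₀), hyp, fun z hz hz0 hzp => ?_⟩
  obtain ⟨s₁, hs₁⟩ := hnonosc z hz hz0
  exact hyp.exists_eq_const_mul hQ hy hz hzp (eventually_ge_atTop s₀ |>.mono hyne)
    (eventually_ge_atTop s₁ |>.mono hs₁)
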